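/- arXiv:2512.12022 — 2 statements merged into one kernel-verified Lean document; each statement's English description precedes it below -/
import Mathlib

section
/- Let E be a real inner product space, let L ≥ 0, let N be a positive integer, and for each i ∈ {1, …, N} let f_i : E → ℝ be convex and differentiable with L-Lipschitz gradient. Let v_1, …, v_N be probability weights (v_i ≥ 0, Σ v_i = 1), let w_1, …, w_N ∈ E, and let w* ∈ E satisfy ∇f_i(w*) = 0 for all i. Then ⟨Σ_{i=1}^N v_i (w_i − w*), Σ_{i=1}^N v_i ∇f_i(w_i)⟩ ≤ Σ_{i=1}^N v_i (f_i(w_i) − f_i(w*)) + L·Σ_{i=1}^N v_i ‖w_i − w*‖². -/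
open RealInnerProductSpace

/-- Convex differentiable function with zero gradient at a point: that point is a global min. -/
lemma min_of_grad_zero {E : Type*} [NormedAddCommGroup E] [InnerProductSpace ℝ E]
    [CompleteSpace E] {f : E → ℝ} (hconv : ConvexOn ℝ Set.univ f)
    (hdiff : Differentiable ℝ f) {p : E} (hp : gradient f p = 0) (x : E) : f p ≤ f x := by
  set d := x - p with hd
  set g : ℝ → ℝ := fun t => f (p + t • d) with hg
  have hgc : ConvexOn ℝ Set.univ g := by
    have := hconv.comp_affineMap (AffineMap.lineMap p x : ℝ →ᵃ[ℝ] E)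
    have h2 : g = f ∘ (AffineMap.lineMap p x : ℝ →ᵃ[ℝ] E) := by
      funext t
      simp [hg, hd, AffineMap.lineMap_apply, add_comm]
    rw [h2]
    simpa using this
  have hcurve : ∀ t : ℝ, HasDerivAt (fun t : ℝ => p + t • d) d t := by
    intro t
    simpa using ((hasDerivAt_id t).smul_const d).const_add p
  have hg0 : HasDerivAt g 0 0 := by
    have hf : HasFDerivAt f ((InnerProductSpace.toDual ℝ E) (gradient f p)) (p + (0:ℝ) • d) := by
      simpa using ((hdiff (p + (0:ℝ) • d)).hasGradientAt.hasFDerivAt)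
    have := hf.comp_hasDerivAt 0 (hcurve 0)
    simp [hp] at this
    exact this
  have := hgc.le_slope_of_hasDerivAt (Set.mem_univ (0:ℝ)) (Set.mem_univ (1:ℝ)) one_pos hg0
  have hs : slope g 0 1 = g 1 - g 0 := by simp [slope_def_field]
  rw [hs] at this
  simpa [hg, hd] using this

/-- First inequality in the bound on Term 3: the cross term between weighted client
deviations and weighted gradients. -/
theorem stmt_5
    {E : Type*} [NormedAddCommGroup E] [InnerProductSpace ℝ E] [CompleteSpace E]
    (L : ℝ) (hL : 0 ≤ L) (N : ℕ) (hN : 0 < N)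
    (f : Fin N → E → ℝ)
    (hconv : ∀ i, ConvexOn ℝ Set.univ (f i))
    (hdiff : ∀ i, Differentiable ℝ (f i))
    (hlip : ∀ i, ∀ x y : E, ‖gradient (f i) x - gradient (f i) y‖ ≤ L * ‖x - y‖)
    (v : Fin N → ℝ) (hv : ∀ i, 0 ≤ v i) (hv1 : ∑ i, v i = 1)
    (w : Fin N → E) (wstar : E) (hstar : ∀ i, gradient (f i) wstar = 0) :
    ⟪∑ i, v i • (w i - wstar), ∑ i, v i • gradient (f i) (w i)⟫
      ≤ (∑ i, v i * (f i (w i) - f i wstar)) + L * ∑ i, v i * ‖w i - wstar‖ ^ 2 := by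
  set u : Fin N → E := fun i => w i - wstar with hu
  set gr : Fin N → E := fun i => gradient (f i) (w i) with hgr
  set a : Fin N → ℝ := fun i => ‖u i‖ ^ 2 with ha
  have hgnorm : ∀ i, ‖gr i‖ ≤ L * ‖u i‖ := by
    intro i
    have := hlip i (w i) wstar
    simpa [hgr, hu, hstar i] using this
  have hterm : ∀ i j, ⟪u i, gr j⟫ ≤ L / 2 * (a i + a j) := by
    intro i j
    have h1 : ⟪u i, gr j⟫ ≤ ‖u i‖ * ‖gr j‖ := real_inner_le_norm _ _
    have h2 : ‖u i‖ * ‖gr j‖ ≤ ‖u i‖ * (L * ‖u j‖) :=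
      mul_le_mul_of_nonneg_left (hgnorm j) (norm_nonneg _)
    have haa : a i = ‖u i‖ ^ 2 := rfl
    have hab : a j = ‖u j‖ ^ 2 := rfl
    rw [haa, hab]
    nlinarith [sq_nonneg (‖u i‖ - ‖u j‖), norm_nonneg (u i), norm_nonneg (u j),
      mul_nonneg hL (sq_nonneg (‖u i‖ - ‖u j‖))]
  have hexp : ⟪∑ i, v i • u i, ∑ i, v i • gr i⟫
      = ∑ i, ∑ j, (v i * v j) * ⟪u i, gr j⟫ := by
    rw [sum_inner]
    refine Finset.sum_congr rfl fun i _ => ?_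
    rw [inner_sum]
    refine Finset.sum_congr rfl fun j _ => ?_
    rw [real_inner_smul_left, real_inner_smul_right]
    ring
  set S : ℝ := ∑ j, v j * a j with hS
  have hbound : ∑ i, ∑ j, (v i * v j) * ⟪u i, gr j⟫ ≤ L * S := by
    have step1 : ∀ i j, (v i * v j) * ⟪u i, gr j⟫ ≤ (v i * v j) * (L / 2 * (a i + a j)) :=
      fun i j => mul_le_mul_of_nonneg_left (hterm i j) (mul_nonneg (hv i) (hv j))
    calc ∑ i, ∑ j, (v i * v j) * ⟪u i, gr j⟫
        ≤ ∑ i, ∑ j, (v i * v j) * (L / 2 * (a i + a j)) :=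
          Finset.sum_le_sum fun i _ => Finset.sum_le_sum fun j _ => step1 i j
      _ = L * S := by
          have inner_eq : ∀ i : Fin N, ∑ j, (v i * v j) * (L / 2 * (a i + a j))
              = L / 2 * (v i * a i + v i * S) := by
            intro i
            have hre : ∀ j : Fin N, (v i * v j) * (L / 2 * (a i + a j))
                = L / 2 * (v i * a i) * v j + L / 2 * v i * (v j * a j) := fun j => by ring
            rw [Finset.sum_congr rfl fun j _ => hre j, Finset.sum_add_distrib,
              ← Finset.mul_sum, ← Finset.mul_sum, hv1, hS]
            ring
          calc ∑ i, ∑ j, (v i * v j) * (L / 2 * (a i + a j))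
              = ∑ i, L / 2 * (v i * a i + v i * S) :=
                Finset.sum_congr rfl fun i _ => inner_eq i
            _ = L / 2 * ∑ i, (v i * a i + v i * S) := by rw [Finset.mul_sum]
            _ = L / 2 * (S + (∑ i, v i) * S) := by
                rw [Finset.sum_add_distrib, Finset.sum_mul, hS]
            _ = L * S := by rw [hv1]; ring
  have hpos : 0 ≤ ∑ i, v i * (f i (w i) - f i wstar) := by
    refine Finset.sum_nonneg fun i _ => mul_nonneg (hv i) ?_
    have := min_of_grad_zero (hconv i) (hdiff i) (hstar i) (w i)
    linarith
  calc ⟪∑ i, v i • u i, ∑ i, v i • gr i⟫ = ∑ i, ∑ j, (v i * v j) * ⟪u i, gr j⟫ := hexp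
    _ ≤ L * S := hbound
    _ ≤ (∑ i, v i * (f i (w i) - f i wstar)) + L * S := by linarith
end

section
/- Let E be a real inner product space, let L ≥ 0, let N be a positive integer, and for each i ∈ {1, …, N} let f_i : E → ℝ be convex and differentiable with L-Lipschitz gradient. Let v_1, …, v_N be probability weights (v_i ≥ 0, Σ v_i = 1), let w_1, …, w_N ∈ E, and let w* ∈ E satisfy ∇f_i(w*) = 0 for all i. Then ⟨Σ_{i=1}^N v_i (w_i − w*), Σ_{i=1}^N v_i ∇f_i(w_i)⟩ ≤ (3L/2)·Σ_{i=1}^N v_i ‖w_i − w*‖². -/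
open RealInnerProductSpace

/-- Full bound on Term 3 (Equation (8) of the paper). -/
theorem stmt_6
    {E : Type*} [NormedAddCommGroup E] [InnerProductSpace ℝ E] [CompleteSpace E]
    (L : ℝ) (hL : 0 ≤ L) (N : ℕ) (hN : 0 < N)
    (f : Fin N → E → ℝ)
    (hconv : ∀ i, ConvexOn ℝ Set.univ (f i))
    (hdiff : ∀ i, Differentiable ℝ (f i))
    (hlip : ∀ i, ∀ x y : E, ‖gradient (f i) x - gradient (f i) y‖ ≤ L * ‖x - y‖)
    (v : Fin N → ℝ) (hv : ∀ i, 0 ≤ v i) (hv1 : ∑ i, v i = 1)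
    (w : Fin N → E) (wstar : E) (hstar : ∀ i, gradient (f i) wstar = 0) :
    ⟪∑ i, v i • (w i - wstar), ∑ i, v i • gradient (f i) (w i)⟫
      ≤ (3 * L / 2) * ∑ i, v i * ‖w i - wstar‖ ^ 2 := by
  set a : Fin N → ℝ := fun i => ‖w i - wstar‖ with ha
  have hg : ∀ i, ‖gradient (f i) (w i)‖ ≤ L * a i := by
    intro i
    have := hlip i (w i) wstar
    rwa [hstar i, sub_zero] at this
  have hS : ∑ i, v i * a i ^ 2 ≥ 0 :=
    Finset.sum_nonneg fun i _ => mul_nonneg (hv i) (sq_nonneg _)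
  have hA : ‖∑ i, v i • (w i - wstar)‖ ≤ ∑ i, v i * a i := by
    refine (norm_sum_le _ _).trans (le_of_eq ?_)
    refine Finset.sum_congr rfl fun i _ => ?_
    rw [norm_smul, Real.norm_eq_abs, abs_of_nonneg (hv i)]
  have hB : ‖∑ i, v i • gradient (f i) (w i)‖ ≤ L * ∑ i, v i * a i := by
    refine (norm_sum_le _ _).trans ?_
    rw [Finset.mul_sum]
    refine Finset.sum_le_sum fun i _ => ?_
    rw [norm_smul, Real.norm_eq_abs, abs_of_nonneg (hv i)]
    calc v i * ‖gradient (f i) (w i)‖ ≤ v i * (L * a i) :=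
          mul_le_mul_of_nonneg_left (hg i) (hv i)
      _ = L * (v i * a i) := by ring
  have hva : 0 ≤ ∑ i, v i * a i :=
    Finset.sum_nonneg fun i _ => mul_nonneg (hv i) (norm_nonneg _)
  have hCS : (∑ i, v i * a i) ^ 2 ≤ ∑ i, v i * a i ^ 2 := by
    have h1 : ∀ i : Fin N, Real.sqrt (v i) * (Real.sqrt (v i) * a i) = v i * a i := by
      intro i
      rw [← mul_assoc, Real.mul_self_sqrt (hv i)]
    have h2 : ∀ i : Fin N, Real.sqrt (v i) ^ 2 = v i := fun i => Real.sq_sqrt (hv i)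
    have h3 : ∀ i : Fin N, (Real.sqrt (v i) * a i) ^ 2 = v i * a i ^ 2 := by
      intro i
      rw [mul_pow, h2]
    have := Finset.sum_mul_sq_le_sq_mul_sq Finset.univ
        (fun i => Real.sqrt (v i)) (fun i => Real.sqrt (v i) * a i)
    simp only [h1, h2, h3] at this
    rwa [hv1, one_mul] at this
  calc ⟪∑ i, v i • (w i - wstar), ∑ i, v i • gradient (f i) (w i)⟫
      ≤ ‖∑ i, v i • (w i - wstar)‖ * ‖∑ i, v i • gradient (f i) (w i)‖ :=
        real_inner_le_norm _ _
    _ ≤ (∑ i, v i * a i) * (L * ∑ i, v i * a i) :=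
        mul_le_mul hA hB (norm_nonneg _) hva
    _ = L * (∑ i, v i * a i) ^ 2 := by ring
    _ ≤ L * ∑ i, v i * a i ^ 2 := mul_le_mul_of_nonneg_left hCS hL
    _ ≤ (3 * L / 2) * ∑ i, v i * a i ^ 2 := by nlinarith
end
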